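/- arXiv:2502.18293 — 2 statements merged into one kernel-verified Lean document; each statement's English description precedes it below -/
import Mathlib

section
/- If the feasibility condition L · sum_{i∉S∪{i_top}} min_{j∈S} A_{i,j} ≤ 1 holds, then the assignment p_i = L · min_{j∈S} A_{i,j} for i ∉ S ∪ {i_top}, p_j = 0 for j ∈ S, and p_{i_top} = 1 − L · sum_{i∉S∪{i_top}} min_{j∈S} A_{i,j} defines a valid feasible probability vector, and it achieves expected reward exactly r_max − L · Cost(S). -/
/-!
Both the witness and `minDist A S` vanish on `S`, so every sum over `Fin N` splits into the
`itop` term plus a sum over the complement of `S ∪ {itop}`. The cost has no `itop` term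
because `r itop = rmax`, and the reward identity becomes linear algebra in the two sums.
-/

/-- Minimum distance from `i` to the set `S` (w.r.t. `A`), `0` if `S` is empty. -/
noncomputable def minDist {N : ℕ} (A : Fin N → Fin N → ℝ) (S : Finset (Fin N)) (i : Fin N) : ℝ :=
  if h : S.Nonempty then S.inf' h (fun j => A i j) else 0

open Finset

theorem Finset.sum_univ_eq_add_sum_sdiff_insert {α M : Type*} [Fintype α] [DecidableEq α]
    [AddCommMonoid M] {f : α → M} {S : Finset α} {a : α} (ha : a ∉ S)
    (hf : ∀ i ∈ S, f i = 0) : ∑ i, f i = f a + ∑ i ∈ univ \ insert a S, f i := by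
  rw [← sum_sdiff (subset_univ (insert a S)), sum_insert ha, sum_eq_zero hf, add_zero, add_comm]

section

variable {N : ℕ} {A : Fin N → Fin N → ℝ} {S : Finset (Fin N)}

lemma minDist_nonneg (hA : ∀ i j, 0 ≤ A i j) (i : Fin N) : 0 ≤ minDist A S i := by
  unfold minDist
  split
  · exact le_inf' _ _ fun j _ => hA i j
  · exact le_rfl

lemma minDist_eq_zero_of_mem (hA : ∀ i j, 0 ≤ A i j) (hAdiag : ∀ i, A i i = 0) {i : Fin N}
    (hi : i ∈ S) : minDist A S i = 0 := by
  refine le_antisymm ?_ (minDist_nonneg hA i)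
  rw [minDist, dif_pos ⟨i, hi⟩, ← hAdiag i]
  exact inf'_le _ hi

lemma sum_mul_minDist_eq_sum_sdiff_insert (hA : ∀ i j, 0 ≤ A i j) (hAdiag : ∀ i, A i i = 0)
    {itop : Fin N} (hitop : itop ∉ S) {g : Fin N → ℝ} (hg : g itop = 0) :
    ∑ i, g i * minDist A S i = ∑ i ∈ univ \ insert itop S, g i * minDist A S i := by
  rw [sum_univ_eq_add_sum_sdiff_insert hitop fun j hj => by
    rw [minDist_eq_zero_of_mem hA hAdiag hj, mul_zero], hg, zero_mul, zero_add]

end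

noncomputable def witnessAssignment {N : ℕ} (A : Fin N → Fin N → ℝ) (S : Finset (Fin N))
    (L : ℝ) (itop : Fin N) (i : Fin N) : ℝ :=
  if i ∈ S then 0 else if i = itop then
    1 - L * ∑ i ∈ univ \ insert itop S, minDist A S i
  else L * minDist A S i

namespace witnessAssignment

variable {N : ℕ} {A : Fin N → Fin N → ℝ} {S : Finset (Fin N)} {L : ℝ} {itop : Fin N}

lemma apply_of_mem {j : Fin N} (hj : j ∈ S) : witnessAssignment A S L itop j = 0 := by
  simp [witnessAssignment, hj]

lemma apply_top (hitop : itop ∉ S) :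
    witnessAssignment A S L itop itop = 1 - L * ∑ i ∈ univ \ insert itop S, minDist A S i := by
  simp [witnessAssignment, hitop]

lemma apply_of_not_mem_insert {i : Fin N} (hi : i ∉ insert itop S) :
    witnessAssignment A S L itop i = L * minDist A S i := by
  rw [mem_insert, not_or] at hi
  simp [witnessAssignment, hi.1, hi.2]

lemma nonneg (hL : 0 ≤ L) (hitop : itop ∉ S) (hA : ∀ i j, 0 ≤ A i j)
    (hfeas : L * ∑ i ∈ univ \ insert itop S, minDist A S i ≤ 1) (i : Fin N) :
    0 ≤ witnessAssignment A S L itop i := by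
  by_cases hiS : i ∈ S
  · rw [apply_of_mem hiS]
  by_cases hi : i = itop
  · rw [hi, apply_top hitop]
    linarith
  · rw [apply_of_not_mem_insert (by simp [hi, hiS])]
    exact mul_nonneg hL (minDist_nonneg hA i)

lemma sum_mul (hitop : itop ∉ S) (w : Fin N → ℝ) :
    ∑ i, w i * witnessAssignment A S L itop i =
      w itop * (1 - L * ∑ i ∈ univ \ insert itop S, minDist A S i) +
        L * ∑ i ∈ univ \ insert itop S, w i * minDist A S i := by
  rw [sum_univ_eq_add_sum_sdiff_insert (f := fun i => w i * witnessAssignment A S L itop i) hitop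
      fun j hj => by rw [apply_of_mem hj, mul_zero],
    apply_top hitop]
  congr 1
  rw [mul_sum]
  refine sum_congr rfl fun i hi => ?_
  rw [apply_of_not_mem_insert (mem_sdiff.1 hi).2]
  ring

lemma sum_eq_one (hitop : itop ∉ S) : ∑ i, witnessAssignment A S L itop i = 1 := by
  simpa using sum_mul (A := A) (L := L) hitop 1

lemma sum_mul_eq_sub_mul_cost (hitop : itop ∉ S) (hA : ∀ i j, 0 ≤ A i j)
    (hAdiag : ∀ i, A i i = 0) {r : Fin N → ℝ} {rmax : ℝ} (hrtop : r itop = rmax) :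
    ∑ i, r i * witnessAssignment A S L itop i =
      rmax - L * ∑ i, (rmax - r i) * minDist A S i := by
  rw [sum_mul hitop, sum_mul_minDist_eq_sum_sdiff_insert hA hAdiag hitop (sub_eq_zero.2 hrtop.symm),
    hrtop, sum_congr rfl fun i _ => sub_mul rmax (r i) (minDist A S i), sum_sub_distrib, ← mul_sum]
  ring

end witnessAssignment

theorem witness_achieves_reward_general {N : ℕ} (r : Fin N → ℝ) (rmax : ℝ)
    (A : Fin N → Fin N → ℝ) (L : ℝ) (hL : 0 < L)
    (S : Finset (Fin N))
    (itop : Fin N) (hitop : itop ∉ S) (hrtop : r itop = rmax)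
    (hA : ∀ i j, 0 ≤ A i j) (hAdiag : ∀ i, A i i = 0)
    (hfeas : L * ∑ i ∈ Finset.univ \ insert itop S, minDist A S i ≤ 1) :
    ∀ p : Fin N → ℝ,
      (p = fun i => if i ∈ S then 0 else if i = itop then
          1 - L * ∑ i ∈ Finset.univ \ insert itop S, minDist A S i
        else L * minDist A S i) →
      (∀ j ∈ S, p j = 0) ∧
      (∀ i, i ∉ S → i ≠ itop → p i ≤ L * minDist A S i) ∧
      (∀ i, 0 ≤ p i) ∧
      (∑ i, p i = 1) ∧
      (∑ i, r i * p i = rmax - L * ∑ i, (rmax - r i) * minDist A S i) := by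
  intro p hp
  obtain rfl : p = witnessAssignment A S L itop := hp
  exact ⟨fun j => witnessAssignment.apply_of_mem,
    fun i hiS hi => (witnessAssignment.apply_of_not_mem_insert (by simp [hi, hiS])).le,
    witnessAssignment.nonneg hL.le hitop hA hfeas,
    witnessAssignment.sum_eq_one hitop,
    witnessAssignment.sum_mul_eq_sub_mul_cost hitop hA hAdiag hrtop⟩

/-- Under the feasibility condition, the explicit witness assignment is a feasible
probability vector and achieves expected reward exactly `rmax − L · Cost(S)`. -/
theorem witness_achieves_reward {N : ℕ} (r : Fin N → ℝ) (rmax : ℝ)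
    (A : Fin N → Fin N → ℝ) (L : ℝ) (hL : 0 < L)
    (S : Finset (Fin N)) (hS : S.Nonempty)
    (itop : Fin N) (hitop : itop ∉ S) (hrtop : r itop = rmax)
    (hub : ∀ i, r i ≤ rmax)
    (hA : ∀ i j, 0 ≤ A i j) (hAdiag : ∀ i, A i i = 0)
    (hfeas : L * ∑ i ∈ Finset.univ \ insert itop S, minDist A S i ≤ 1) :
    ∀ p : Fin N → ℝ,
      (p = fun i => if i ∈ S then 0 else if i = itop then
          1 - L * ∑ i ∈ Finset.univ \ insert itop S, minDist A S i
        else L * minDist A S i) →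
      (∀ j ∈ S, p j = 0) ∧
      (∀ i, i ∉ S → i ≠ itop → p i ≤ L * minDist A S i) ∧
      (∀ i, 0 ≤ p i) ∧
      (∑ i, p i = 1) ∧
      (∑ i, r i * p i = rmax - L * ∑ i, (rmax - r i) * minDist A S i) :=
  witness_achieves_reward_general r rmax A L hL S itop hitop hrtop hA hAdiag hfeas
end

section
/- The optimal value of the MIP P over all feasible assignments equals min over size-K subsets S of sum_i w_i · min_{j∈S} A_{i,j}; that is, solving P is equivalent to minimizing the weighted coverage cost over all subsets of size K. -/
/-- Feasibility for the MIP `P`: exactly `K` selected centers, each point assigned to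
exactly one selected center, and big-`M` linking constraints on `y`. -/
def FeasibleMIP {N : ℕ} (K : ℕ) (A : Fin N → Fin N → ℝ) (M : ℝ)
    (x : Fin N → Bool) (z : Fin N → Fin N → Bool) (y : Fin N → ℝ) : Prop :=
  (Finset.univ.filter (fun j => x j = true)).card = K ∧
  (∀ i j, z i j = true → x j = true) ∧
  (∀ i, ∃! j, z i j = true) ∧
  (∀ i, 0 ≤ y i) ∧
  (∀ i j, y i ≤ A i j + M * (1 - (if z i j then (1 : ℝ) else 0))) ∧
  (∀ i j, A i j - M * (1 - (if z i j then (1 : ℝ) else 0)) ≤ y i)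

theorem csInf_eq_csInf_of_subset_of_forall_exists_le {α : Type*} [ConditionallyCompleteLattice α]
    {s t : Set α} (hst : s ⊆ t) (ht : BddBelow t) (h : ∀ b ∈ t, ∃ a ∈ s, a ≤ b) :
    sInf s = sInf t := by
  rcases t.eq_empty_or_nonempty with rfl | ht_ne
  · rw [Set.subset_empty_iff.mp hst]
  have hs_ne : s.Nonempty := by
    obtain ⟨b, hb⟩ := ht_ne
    obtain ⟨a, ha, -⟩ := h b hb
    exact ⟨a, ha⟩
  refine le_antisymm ?_ (csInf_le_csInf ht hs_ne hst)
  refine le_csInf ht_ne fun b hb => ?_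
  obtain ⟨a, ha, hab⟩ := h b hb
  exact (csInf_le (ht.mono hst) ha).trans hab

section Coverage

variable {N : ℕ} (A : Fin N → Fin N → ℝ)

noncomputable def coverageCost (w : Fin N → ℝ) (S : Finset (Fin N)) : ℝ :=
  ∑ i, w i * minDist A S i

theorem minDist_le {S : Finset (Fin N)} {i j : Fin N} (hj : j ∈ S) : minDist A S i ≤ A i j := by
  rw [minDist, dif_pos ⟨j, hj⟩]
  exact Finset.inf'_le _ hj

theorem exists_mem_minDist_eq {S : Finset (Fin N)} (hS : S.Nonempty) (i : Fin N) :
    ∃ j ∈ S, minDist A S i = A i j := by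
  rw [minDist, dif_pos hS]
  exact Finset.exists_mem_eq_inf' hS _

variable {A} {K : ℕ} {M : ℝ}

theorem FeasibleMIP.eq_of_assigned {x : Fin N → Bool} {z : Fin N → Fin N → Bool} {y : Fin N → ℝ}
    (hP : FeasibleMIP K A M x z y) {i j : Fin N} (hij : z i j = true) : y i = A i j := by
  obtain ⟨-, -, -, -, hub, hlb⟩ := hP
  have hle := hub i j
  have hge := hlb i j
  simp only [hij, if_true, sub_self, mul_zero, add_zero, sub_zero] at hle hge
  exact le_antisymm hle hge

theorem FeasibleMIP.coverageCost_le {x : Fin N → Bool} {z : Fin N → Fin N → Bool}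
    {y : Fin N → ℝ} (hP : FeasibleMIP K A M x z y) {w : Fin N → ℝ} (hw : ∀ i, 0 ≤ w i) :
    coverageCost A w (Finset.univ.filter fun j => x j = true) ≤ ∑ i, w i * y i := by
  refine Finset.sum_le_sum fun i _ => mul_le_mul_of_nonneg_left ?_ (hw i)
  obtain ⟨j, hij, -⟩ := hP.2.2.1 i
  rw [hP.eq_of_assigned hij]
  exact minDist_le A (Finset.mem_filter.mpr ⟨Finset.mem_univ j, hP.2.1 i j hij⟩)

/-- Since `0 ≤ A ≤ M`, the big-`M` constraints of the unassigned pairs are slack. -/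
theorem feasibleMIP_of_assignment (hA : ∀ i j, 0 ≤ A i j) (hM : ∀ i j, A i j ≤ M)
    {S : Finset (Fin N)} (hS : S.card = K) {f : Fin N → Fin N} (hf : ∀ i, f i ∈ S) :
    FeasibleMIP K A M (fun j => decide (j ∈ S)) (fun i j => decide (j = f i))
      (fun i => A i (f i)) := by
  refine ⟨by simpa using hS, fun i j hij => ?_, fun i => ⟨f i, by simp, fun j => by simp⟩,
    fun i => hA i (f i), fun i j => ?_, fun i j => ?_⟩
  · rw [decide_eq_true_eq] at hij ⊢
    exact hij ▸ hf i
  all_goals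
    by_cases hj : j = f i
    · subst hj; simp
    · simp only [hj, decide_false, Bool.false_eq_true, if_false, sub_zero, mul_one]
      linarith [hA i j, hA i (f i), hM i j, hM i (f i)]

theorem exists_feasibleMIP_eq_coverageCost (hA : ∀ i j, 0 ≤ A i j) (hM : ∀ i j, A i j ≤ M)
    (w : Fin N → ℝ) {S : Finset (Fin N)} (hS : S.card = K) (hK : 0 < K) :
    ∃ x z y, FeasibleMIP K A M x z y ∧ coverageCost A w S = ∑ i, w i * y i := by
  choose f hf hfS using exists_mem_minDist_eq A (Finset.card_pos.mp (hS ▸ hK))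
  exact ⟨_, _, _, feasibleMIP_of_assignment hA hM hS hf,
    Finset.sum_congr rfl fun i _ => by rw [hfS]⟩

end Coverage

theorem mip_equals_coverage_min_general {N K : ℕ} (hK : 0 < K)
    (A : Fin N → Fin N → ℝ) (hA : ∀ i j, 0 ≤ A i j)
    (M : ℝ) (hM : ∀ i j, A i j ≤ M)
    (w : Fin N → ℝ) (hw : ∀ i, 0 ≤ w i) :
    sInf {v : ℝ | ∃ x z y, FeasibleMIP K A M x z y ∧ v = ∑ i, w i * y i}
      = sInf {v : ℝ | ∃ S : Finset (Fin N), S.card = K ∧ v = ∑ i, w i * minDist A S i} := by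
  symm
  refine csInf_eq_csInf_of_subset_of_forall_exists_le ?_ ⟨0, ?_⟩ ?_
  · rintro v ⟨S, hS, rfl⟩
    exact exists_feasibleMIP_eq_coverageCost hA hM w hS hK
  · rintro v ⟨x, z, y, hP, rfl⟩
    exact Finset.sum_nonneg fun i _ => mul_nonneg (hw i) (hP.2.2.2.1 i)
  · rintro v ⟨x, z, y, hP, rfl⟩
    exact ⟨_, ⟨_, hP.1, rfl⟩, hP.coverageCost_le hw⟩

/-- The optimal value of the MIP `P` equals the minimum weighted coverage cost over all
size-`K` subsets. -/
theorem mip_equals_coverage_min {N K : ℕ} (hK : 0 < K) (hKN : K ≤ N)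
    (A : Fin N → Fin N → ℝ) (hA : ∀ i j, 0 ≤ A i j)
    (M : ℝ) (hM : ∀ i j, A i j ≤ M)
    (w : Fin N → ℝ) (hw : ∀ i, 0 ≤ w i) :
    sInf {v : ℝ | ∃ x z y, FeasibleMIP K A M x z y ∧ v = ∑ i, w i * y i}
      = sInf {v : ℝ | ∃ S : Finset (Fin N), S.card = K ∧ v = ∑ i, w i * minDist A S i} :=
  mip_equals_coverage_min_general hK A hA M hM w hw
end
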